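/- Let X be a locally finite weighted graph, V ≥ 0 and f > 0 on X. Then the weighted Hardy inequality ∑_x V(x)|∇u|²(x) ≥ ∑_x (−div(V∇f)(x)/f(x)) u(x)² holds for all finitely supported u on X. -/

import Mathlib

/-!
Both sides are finite double sums over the edges meeting the support of `u`. Pairing the
term of `(x, y)` with that of `(y, x)`, an edge contributes `b(x,y)/2 · (V x + V y)` times
`(u x - u y)²` on the left and times `(f x - f y)(u x²/f x - u y²/f y)` on the right, and
`(s - t)(a²/s - c²/t) ≤ (a - c)²` for `s, t > 0` is `(t a - s c)² ≥ 0` after clearing denominators.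
-/

/-- Pointwise squared gradient `|∇u|²(x) = (1/2)∑_y b(x,y)(u(x) − u(y))²`. -/
noncomputable def graphGradSq {X : Type*} (b : X → X → ℝ) (u : X → ℝ) (x : X) : ℝ :=
  (1 / 2) * ∑' y, b x y * (u x - u y) ^ 2

/-- Divergence of `F : X × X → ℝ`: `div F(x) = (1/2)∑_y b(x,y)(F(y,x) − F(x,y))`. -/
noncomputable def graphDiv {X : Type*} (b : X → X → ℝ) (F : X → X → ℝ) (x : X) : ℝ :=
  (1 / 2) * ∑' y, b x y * (F y x - F x y)

lemma sub_mul_div_sub_div_le_sq {R : Type*} [Field R] [LinearOrder R] [IsStrictOrderedRing R]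
    {s t : R} (hs : 0 < s) (ht : 0 < t) (a c : R) :
    (s - t) * (a ^ 2 / s - c ^ 2 / t) ≤ (a - c) ^ 2 := by
  rw [div_sub_div _ _ hs.ne' ht.ne', ← mul_div_assoc, div_le_iff₀ (by positivity)]
  nlinarith [sq_nonneg (t * a - s * c)]

theorem Finset.sum_sum_le_sum_sum_of_add_swap_le {ι R : Type*} [Field R] [LinearOrder R]
    [IsStrictOrderedRing R] (s : Finset ι) {p q : ι → ι → R}
    (h : ∀ i j, p i j + p j i ≤ q i j + q j i) :
    ∑ i ∈ s, ∑ j ∈ s, p i j ≤ ∑ i ∈ s, ∑ j ∈ s, q i j := by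
  have hsum := Finset.sum_le_sum fun i (_ : i ∈ s) => Finset.sum_le_sum fun j (_ : j ∈ s) => h i j
  simp only [Finset.sum_add_distrib] at hsum
  rw [Finset.sum_comm (f := fun i j => p j i), Finset.sum_comm (f := fun i j => q j i)] at hsum
  linarith

theorem tsum_tsum_eq_sum_sum {ι M : Type*} [AddCommMonoid M] [TopologicalSpace M]
    {s : Finset ι} {F : ι → ι → M} (hF : ∀ i j, F i j ≠ 0 → i ∈ s ∧ j ∈ s) :
    ∑' i, ∑' j, F i j = ∑ i ∈ s, ∑ j ∈ s, F i j := by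
  have hrow : ∀ i, ∑' j, F i j = ∑ j ∈ s, F i j := fun i =>
    tsum_eq_sum fun j hj => by_contra fun h => hj (hF i j h).2
  rw [tsum_eq_sum (s := s) fun i hi => ?_]
  · exact Finset.sum_congr rfl fun i _ => hrow i
  · rw [hrow, Finset.sum_eq_zero fun j _ => by_contra fun h => hi (hF i j h).1]

lemma exists_finset_mem_of_edge_meets_support {X : Type*} {b : X → X → ℝ}
    (hsym : ∀ x y, b x y = b y x) (hlf : ∀ x, {y | b x y ≠ 0}.Finite) {u : X → ℝ}
    (hu : (Function.support u).Finite) :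
    ∃ W : Finset X, ∀ x y, b x y ≠ 0 → (u x ≠ 0 ∨ u y ≠ 0) → x ∈ W ∧ y ∈ W := by
  classical
  set W := hu.toFinset ∪ hu.toFinset.biUnion fun x => (hlf x).toFinset
  have hsupp : ∀ x, u x ≠ 0 → x ∈ W := fun x hx => Finset.mem_union_left _ (by simpa using hx)
  have hnbr : ∀ x y, b x y ≠ 0 → u x ≠ 0 → y ∈ W := fun x y hb hx =>
    Finset.mem_union_right _ (Finset.mem_biUnion.2 ⟨x, by simpa using hx, by simpa using hb⟩)
  refine ⟨W, ?_⟩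
  rintro x y hb (hx | hy)
  · exact ⟨hsupp x hx, hnbr x y hb hx⟩
  · exact ⟨hnbr y x (hsym x y ▸ hb) hy, hsupp y hy⟩

lemma hardy_summand_add_swap_le {X : Type*} {b : X → X → ℝ} (hsym : ∀ x y, b x y = b y x)
    (hnonneg : ∀ x y, 0 ≤ b x y) {V f : X → ℝ} (hV : ∀ x, 0 ≤ V x) (hf : ∀ x, 0 < f x)
    (u : X → ℝ) (x y : X) :
    -(1 / 2 * (b x y * (V y * (f y - f x) - V x * (f x - f y)))) / f x * u x ^ 2
        + -(1 / 2 * (b y x * (V x * (f x - f y) - V y * (f y - f x)))) / f y * u y ^ 2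
      ≤ V x * (1 / 2 * (b x y * (u x - u y) ^ 2)) + V y * (1 / 2 * (b y x * (u y - u x) ^ 2)) := by
  have hw : 0 ≤ 1 / 2 * b x y * (V x + V y) := by
    have := hnonneg x y; have := hV x; have := hV y; positivity
  calc _ = 1 / 2 * b x y * (V x + V y) * ((f x - f y) * (u x ^ 2 / f x - u y ^ 2 / f y)) := by
        rw [← hsym x y]; field_simp [(hf x).ne', (hf y).ne']; ring
    _ ≤ 1 / 2 * b x y * (V x + V y) * (u x - u y) ^ 2 :=
        mul_le_mul_of_nonneg_left (sub_mul_div_sub_div_le_sq (hf x) (hf y) _ _) hw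
    _ = _ := by rw [← hsym x y]; ring

theorem graph_weighted_hardy {X : Type*} (b : X → X → ℝ)
    (hsym : ∀ x y, b x y = b y x) (hnonneg : ∀ x y, 0 ≤ b x y)
    (hlf : ∀ x, {y | b x y ≠ 0}.Finite)
    (V f u : X → ℝ) (hV : ∀ x, 0 ≤ V x) (hf : ∀ x, 0 < f x)
    (hu : (Function.support u).Finite) :
    ∑' x, V x * graphGradSq b u x ≥
      ∑' x, (-(graphDiv b (fun x y => V x * (f x - f y)) x) / f x) * (u x) ^ 2 := by
  obtain ⟨W, hW⟩ := exists_finset_mem_of_edge_meets_support hsym hlf hu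
  simp only [graphGradSq, graphDiv, ← tsum_mul_left, ← tsum_neg, ← tsum_div_const,
    ← tsum_mul_right]
  rw [ge_iff_le, tsum_tsum_eq_sum_sum fun x y h => hW x y (by rintro hb; simp [hb] at h)
      (.inl (by rintro hx; simp [hx] at h)),
    tsum_tsum_eq_sum_sum fun x y h => hW x y (by rintro hb; simp [hb] at h)
      (by by_contra! hxy; simp [hxy] at h)]
  exact Finset.sum_sum_le_sum_sum_of_add_swap_le W
    (hardy_summand_add_swap_le hsym hnonneg hV hf u)
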